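/- Let p = 2 and w = (a_0,…,a_5) ∈ V_5 over 𝔽_2 with Cat_{2,2}(x,y:w) ≠ 0. Then there is an integer C with |C| ≤ 2 such that S(w) = C·p² = 4C; in particular S(w) ∈ {−8, −4, 0, 4, 8}. -/

import Mathlib

open Finset

/-- Multiplication of binary forms encoded by coefficient tuples: a binary form
`∑ i, f i • x^(a-i) * y^i` of degree `a` is encoded as the tuple `f : Fin (a+1) → k`,
and multiplication of forms is convolution of coefficient tuples. -/
def formMul {k : Type*} [CommRing k] {a b : ℕ} (f : Fin (a + 1) → k)
    (g : Fin (b + 1) → k) : Fin (a + b + 1) → k :=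
  fun i => ∑ q : Fin (a + 1) × Fin (b + 1),
    if (q.1 : ℕ) + (q.2 : ℕ) = (i : ℕ) then f q.1 * g q.2 else 0

/-- The pairing `(w, v) = ∑ i, w i * v i` between `V_n` and `V_n^*`. -/
def pair {k : Type*} [CommRing k] {n : ℕ} (w v : Fin (n + 1) → k) : k :=
  ∑ i, w i * v i

/-- A binary quintic form is singular if it is nonzero and, over an algebraic closure,
it is divisible by the square of a nonzero linear form. -/
def IsSingularQuintic {k : Type*} [Field k] (v : Fin 6 → k) : Prop :=
  v ≠ 0 ∧ ∃ (l : Fin 2 → AlgebraicClosure k) (c : Fin 4 → AlgebraicClosure k),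
    l ≠ 0 ∧
    (fun i => algebraMap k (AlgebraicClosure k) (v i)) = formMul (formMul l l) c

open scoped Classical in
/-- The exponential sum `S(w)` over binary quintic forms that are zero or singular. -/
noncomputable def expSum (p : ℕ) [Fact p.Prime] (w : Fin 6 → ZMod p) : ℂ :=
  ∑ v : Fin 6 → ZMod p,
    if v = 0 ∨ IsSingularQuintic v then
      Complex.exp (2 * Real.pi * Complex.I * ((pair w v).val : ℂ) / (p : ℂ))
    else 0

/-- The catalecticant covariant `Cat_{2,2}(x,y:w) = det (x•A₁ - y•A₀)`, a binary cubic
form, regarded as a polynomial in the two variables `x = X 0` and `y = X 1`. -/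
noncomputable def cat22 {k : Type*} [CommRing k] (w : Fin 6 → k) :
    MvPolynomial (Fin 2) k :=
  Matrix.det (Matrix.of fun i j : Fin 3 =>
    MvPolynomial.X 0 * MvPolynomial.C (w ⟨(i : ℕ) + (j : ℕ) + 1, by omega⟩) -
    MvPolynomial.X 1 * MvPolynomial.C (w ⟨(i : ℕ) + (j : ℕ), by omega⟩))

/-! In characteristic 2 the partial derivatives of a binary quintic `v` are
`Q₀(x², y²)` and `Q₁(x², y²)` for the binary quadratics `Q₀ = v₀X² + v₂XY + v₄Y²` and
`Q₁ = v₁X² + v₃XY + v₅Y²`, so `v` has a repeated linear factor exactly when `Q₀` and `Q₁` have a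
common projective zero, i.e. when their resultant vanishes. Over `𝔽₂` this makes the set of zero
or singular quintics the zero set of an explicit polynomial, and `S(w)` becomes a signed count of
its points; the claim is then a finite check over the 64 forms `w`. -/

lemma formMul_sq_apply {R : Type*} [CommRing R] (l : Fin 2 → R) (c : Fin 4 → R) :
    formMul (formMul l l) c =
      ![l 0 ^ 2 * c 0,
        l 0 ^ 2 * c 1 + 2 * l 0 * l 1 * c 0,
        l 0 ^ 2 * c 2 + 2 * l 0 * l 1 * c 1 + l 1 ^ 2 * c 0,
        l 0 ^ 2 * c 3 + 2 * l 0 * l 1 * c 2 + l 1 ^ 2 * c 1,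
        2 * l 0 * l 1 * c 3 + l 1 ^ 2 * c 2,
        l 1 ^ 2 * c 3] := by
  funext i
  fin_cases i <;> simp [formMul, Fintype.sum_prod_type, Fin.sum_univ_succ] <;> ring

/-- In characteristic 2, `quinticPartialX v` and `quinticPartialY v` are the partial derivatives
`∂v/∂x` and `∂v/∂y` of the quintic `v`. -/
def quinticPartialX {R : Type*} [CommRing R] (v : Fin 6 → R) (x y : R) : R :=
  v 0 * x ^ 4 + v 2 * x ^ 2 * y ^ 2 + v 4 * y ^ 4

def quinticPartialY {R : Type*} [CommRing R] (v : Fin 6 → R) (x y : R) : R :=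
  v 1 * x ^ 4 + v 3 * x ^ 2 * y ^ 2 + v 5 * y ^ 4

-- in characteristic 2, `(l 1, l 0)` is the zero of the linear form `l`
lemma partials_formMul_sq_vanish {R : Type*} [CommRing R] [CharP R 2] (l : Fin 2 → R)
    (c : Fin 4 → R) :
    quinticPartialX (formMul (formMul l l) c) (l 1) (l 0) = 0 ∧
      quinticPartialY (formMul (formMul l l) c) (l 1) (l 0) = 0 := by
  have h2 : (2 : R) = 0 := CharTwo.two_eq_zero
  simp only [quinticPartialX, quinticPartialY, formMul_sq_apply, Matrix.cons_val]
  constructor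
  · linear_combination (l 0 ^ 2 * l 1 ^ 4 * c 0 + l 0 ^ 4 * l 1 ^ 2 * c 2 +
      l 0 ^ 3 * l 1 ^ 3 * c 1 + l 0 ^ 5 * l 1 * c 3) * h2
  · linear_combination (l 0 ^ 2 * l 1 ^ 4 * c 1 + l 0 ^ 4 * l 1 ^ 2 * c 3 +
      l 0 * l 1 ^ 5 * c 0 + l 0 ^ 3 * l 1 ^ 3 * c 2) * h2

lemma exists_sq_mul_of_partials_vanish {K : Type*} [Field K] [CharP K 2] {v : Fin 6 → K}
    {x y : K} (hxy : x ≠ 0 ∨ y ≠ 0) (hX : quinticPartialX v x y = 0)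
    (hY : quinticPartialY v x y = 0) :
    ∃ (l : Fin 2 → K) (c : Fin 4 → K), l ≠ 0 ∧ v = formMul (formMul l l) c := by
  have h2 : (2 : K) = 0 := CharTwo.two_eq_zero
  unfold quinticPartialX at hX
  unfold quinticPartialY at hY
  by_cases hy : y = 0
  · subst hy
    have hx : x ≠ 0 := hxy.resolve_right (not_not.mpr rfl)
    have hv0 : v 0 = 0 := by simpa [hx] using hX
    have hv1 : v 1 = 0 := by simpa [hx] using hY
    refine ⟨![0, x], ![v 2 / x ^ 2, v 3 / x ^ 2, v 4 / x ^ 2, v 5 / x ^ 2], by simp [hx], ?_⟩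
    rw [formMul_sq_apply]
    funext i
    fin_cases i <;>
      simp only [Fin.isValue, Fin.reduceFinMk, Matrix.cons_val, hv0, hv1] <;> field_simp <;> ring
  · -- `c` is the quotient of `v` by `l²`, which has coefficients `(y², 0, x²)` in
    -- characteristic 2; `hX` and `hY` say that the remainder vanishes
    refine ⟨![y, x], ![v 0 / y ^ 2, v 1 / y ^ 2, (v 2 - x ^ 2 * v 0 / y ^ 2) / y ^ 2,
      (v 3 - x ^ 2 * v 1 / y ^ 2) / y ^ 2], by simp [hy], ?_⟩
    rw [formMul_sq_apply]
    funext i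
    fin_cases i <;> simp only [Fin.isValue, Fin.reduceFinMk, Matrix.cons_val] <;> field_simp
    · linear_combination -(x * v 0) * h2
    · linear_combination -(x * y * v 1) * h2
    · linear_combination -(x * (y ^ 2 * v 2 - x ^ 2 * v 0)) * h2
    · linear_combination hX - (x ^ 2 * y ^ 2 * v 2 + x * y * (y ^ 2 * v 3 - x ^ 2 * v 1)) * h2
    · linear_combination hY - x ^ 2 * y ^ 2 * v 3 * h2

lemma exists_sq_mul_iff_partials_vanish {K : Type*} [Field K] [CharP K 2] (v : Fin 6 → K) :
    (∃ (l : Fin 2 → K) (c : Fin 4 → K), l ≠ 0 ∧ v = formMul (formMul l l) c) ↔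
      ∃ x y : K, (x ≠ 0 ∨ y ≠ 0) ∧ quinticPartialX v x y = 0 ∧ quinticPartialY v x y = 0 := by
  constructor
  · rintro ⟨l, c, hl, rfl⟩
    have hl' : l 1 ≠ 0 ∨ l 0 ≠ 0 := by
      by_contra! h
      exact hl (funext fun i => by fin_cases i <;> simp [h.1, h.2])
    exact ⟨l 1, l 0, hl', partials_formMul_sq_vanish l c⟩
  · rintro ⟨x, y, hxy, hX, hY⟩
    exact exists_sq_mul_of_partials_vanish hxy hX hY

/-- The resultant of the binary quadratics `a₀X² + a₁XY + a₂Y²` and `b₀X² + b₁XY + b₂Y²`. -/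
def quadResultant {R : Type*} [CommRing R] (a₀ a₁ a₂ b₀ b₁ b₂ : R) : R :=
  (a₀ * b₂ - a₂ * b₀) ^ 2 - (a₀ * b₁ - a₁ * b₀) * (a₁ * b₂ - a₂ * b₁)

lemma quadResultant_eq_zero_of_common_root {R : Type*} [CommRing R] [NoZeroDivisors R]
    {a₀ a₁ a₂ b₀ b₁ b₂ X Y : R} (hXY : X ≠ 0 ∨ Y ≠ 0)
    (ha : a₀ * X ^ 2 + a₁ * X * Y + a₂ * Y ^ 2 = 0)
    (hb : b₀ * X ^ 2 + b₁ * X * Y + b₂ * Y ^ 2 = 0) :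
    quadResultant a₀ a₁ a₂ b₀ b₁ b₂ = 0 := by
  unfold quadResultant
  set D₀ := a₀ * b₁ - a₁ * b₀
  set D₁ := a₀ * b₂ - a₂ * b₀
  set D₂ := a₁ * b₂ - a₂ * b₁
  have hY : (D₁ ^ 2 - D₀ * D₂) * Y ^ 3 = 0 := by
    linear_combination ((D₀ * X - D₁ * Y) * b₀ + D₀ * Y * b₁) * ha +
      (-(D₀ * X - D₁ * Y) * a₀ - D₀ * Y * a₁) * hb
  have hX : (D₁ ^ 2 - D₀ * D₂) * X ^ 3 = 0 := by
    linear_combination ((D₁ * X - D₂ * Y) * b₂ - D₂ * X * b₁) * ha +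
      (-(D₁ * X - D₂ * Y) * a₂ + D₂ * X * a₁) * hb
  rcases hXY with hX0 | hY0
  · exact (mul_eq_zero.mp hX).resolve_right (pow_ne_zero 3 hX0)
  · exact (mul_eq_zero.mp hY).resolve_right (pow_ne_zero 3 hY0)

def quinticResultant {R : Type*} [CommRing R] (v : Fin 6 → R) : R :=
  quadResultant (v 0) (v 2) (v 4) (v 1) (v 3) (v 5)

lemma quinticResultant_eq_zero_of_partials_vanish {R : Type*} [CommRing R] [NoZeroDivisors R]
    {v : Fin 6 → R} {x y : R} (hxy : x ≠ 0 ∨ y ≠ 0) (hX : quinticPartialX v x y = 0)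
    (hY : quinticPartialY v x y = 0) : quinticResultant v = 0 :=
  quadResultant_eq_zero_of_common_root (X := x ^ 2) (Y := y ^ 2)
    (hxy.imp (pow_ne_zero 2) (pow_ne_zero 2))
    (by rw [← hX, quinticPartialX]; ring) (by rw [← hY, quinticPartialY]; ring)

lemma isSingularQuintic_iff {k : Type*} [Field k] [CharP k 2] (v : Fin 6 → k) :
    IsSingularQuintic v ↔ v ≠ 0 ∧ ∃ x y : AlgebraicClosure k, (x ≠ 0 ∨ y ≠ 0) ∧
      quinticPartialX (algebraMap k _ ∘ v) x y = 0 ∧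
      quinticPartialY (algebraMap k _ ∘ v) x y = 0 := by
  rw [IsSingularQuintic, ← exists_sq_mul_iff_partials_vanish]
  rfl

lemma quinticPartialX_map {R S : Type*} [CommRing R] [CommRing S] (f : R →+* S)
    (v : Fin 6 → R) (x y : R) :
    quinticPartialX (f ∘ v) (f x) (f y) = f (quinticPartialX v x y) := by
  simp [quinticPartialX]

lemma quinticPartialY_map {R S : Type*} [CommRing R] [CommRing S] (f : R →+* S)
    (v : Fin 6 → R) (x y : R) :
    quinticPartialY (f ∘ v) (f x) (f y) = f (quinticPartialY v x y) := by
  simp [quinticPartialY]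

lemma quinticResultant_map {R S : Type*} [CommRing R] [CommRing S] (f : R →+* S)
    (v : Fin 6 → R) : quinticResultant (f ∘ v) = f (quinticResultant v) := by
  simp [quinticResultant, quadResultant]

/-- Either the two quadratics have a common root in `ℙ¹(𝔽₂)`, or their common root lies in
`𝔽₄ \ 𝔽₂` and both are multiples of `X² + XY + Y²`. -/
lemma quinticResultant_eq_zero_cases_zmod_two (v : Fin 6 → ZMod 2)
    (h : quinticResultant v = 0) :
    (∃ x y : ZMod 2, (x ≠ 0 ∨ y ≠ 0) ∧ quinticPartialX v x y = 0 ∧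
      quinticPartialY v x y = 0) ∨
    (v 0 = v 2 ∧ v 2 = v 4 ∧ v 1 = v 3 ∧ v 3 = v 5) := by
  revert v
  decide

open Polynomial in
lemma IsAlgClosed.exists_sq_add_add_one_eq_zero (K : Type*) [Field K] [IsAlgClosed K] :
    ∃ ω : K, ω ^ 2 + ω + 1 = 0 := by
  have hdeg : (X ^ 2 + X + 1 : K[X]).degree = 2 := by compute_degree!
  obtain ⟨ω, hω⟩ := IsAlgClosed.exists_root (X ^ 2 + X + 1 : K[X]) (by rw [hdeg]; decide)
  exact ⟨ω, by simpa using hω⟩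

lemma zero_or_isSingularQuintic_iff (v : Fin 6 → ZMod 2) :
    v = 0 ∨ IsSingularQuintic v ↔ quinticResultant v = 0 := by
  set ι := algebraMap (ZMod 2) (AlgebraicClosure (ZMod 2))
  constructor
  · rintro (rfl | hv)
    · simp [quinticResultant, quadResultant]
    · obtain ⟨-, x, y, hxy, hX, hY⟩ := (isSingularQuintic_iff v).mp hv
      apply ι.injective
      rw [map_zero, ← quinticResultant_map]
      exact quinticResultant_eq_zero_of_partials_vanish hxy hX hY
  · intro h
    refine or_iff_not_imp_left.mpr fun hv => (isSingularQuintic_iff v).mpr ⟨hv, ?_⟩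
    rcases quinticResultant_eq_zero_cases_zmod_two v h with
      ⟨x, y, hxy, hX, hY⟩ | ⟨h02, h24, h13, h35⟩
    · refine ⟨ι x, ι y, hxy.imp (map_ne_zero_iff ι ι.injective).mpr
        (map_ne_zero_iff ι ι.injective).mpr, ?_, ?_⟩
      · rw [quinticPartialX_map, hX, map_zero]
      · rw [quinticPartialY_map, hY, map_zero]
    · obtain ⟨ω, hω⟩ := IsAlgClosed.exists_sq_add_add_one_eq_zero (AlgebraicClosure (ZMod 2))
      refine ⟨ω, 1, Or.inr one_ne_zero, ?_, ?_⟩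
      · simp only [quinticPartialX, Function.comp_apply, ← h24, ← h02]
        linear_combination ι (v 0) * (ω ^ 2 - ω + 1) * hω
      · simp only [quinticPartialY, Function.comp_apply, ← h35, ← h13]
        linear_combination ι (v 1) * (ω ^ 2 - ω + 1) * hω

lemma cexp_two_pi_I_mul_div_two (t : ℕ) :
    Complex.exp (2 * Real.pi * Complex.I * t / 2) = (-1) ^ t := by
  rw [show 2 * (Real.pi : ℂ) * Complex.I * t / 2 = t * (Real.pi * Complex.I) by ring,
    Complex.exp_nat_mul, Complex.exp_pi_mul_I]

def signedResultantCount (w : Fin 6 → ZMod 2) : ℤ :=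
  ∑ v : Fin 6 → ZMod 2, if quinticResultant v = 0 then (-1) ^ (pair w v).val else 0

lemma expSum_two_eq (w : Fin 6 → ZMod 2) : expSum 2 w = signedResultantCount w := by
  rw [expSum, signedResultantCount]
  push_cast
  refine Finset.sum_congr rfl fun v _ => ?_
  simp only [zero_or_isSingularQuintic_iff, cexp_two_pi_I_mul_div_two]

def cat22Coeffs {R : Type*} [CommRing R] (w : Fin 6 → R) : Fin 4 → R :=
  ![-(w 3 * w 3 * w 3) + 2 * (w 2 * w 3 * w 4) - w 2 * w 2 * w 5 - w 1 * w 4 * w 4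
      + w 1 * w 3 * w 5,
    w 2 * w 3 * w 3 - w 2 * w 2 * w 4 - w 1 * w 3 * w 4 + w 1 * w 2 * w 5 + w 0 * w 4 * w 4
      - w 0 * w 3 * w 5,
    -(w 2 * w 2 * w 3) + w 1 * w 3 * w 3 + w 1 * w 2 * w 4 - w 1 * w 1 * w 5 - w 0 * w 3 * w 4
      + w 0 * w 2 * w 5,
    w 2 * w 2 * w 2 - 2 * (w 1 * w 2 * w 3) + w 1 * w 1 * w 4 + w 0 * w 3 * w 3
      - w 0 * w 2 * w 4]

open MvPolynomial in
lemma cat22_eq {R : Type*} [CommRing R] (w : Fin 6 → R) :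
    cat22 w = C (cat22Coeffs w 0) * X 0 ^ 3 + C (cat22Coeffs w 1) * X 0 ^ 2 * X 1 +
      C (cat22Coeffs w 2) * X 0 * X 1 ^ 2 + C (cat22Coeffs w 3) * X 1 ^ 3 := by
  simp only [cat22, cat22Coeffs, Matrix.det_fin_three, Matrix.of_apply, Fin.isValue,
    Fin.coe_ofNat_eq_mod, Nat.zero_mod, Nat.one_mod, Nat.mod_succ, Nat.reduceAdd, add_zero, zero_add,
    Fin.mk_one, Fin.zero_eta, Fin.reduceFinMk, Matrix.cons_val_zero, Matrix.cons_val_one,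
    Matrix.cons_val, C_add, C_sub, C_neg, C_mul, map_ofNat]
  ring

set_option maxRecDepth 10000 in
lemma four_dvd_signedResultantCount_and_abs_le (w : Fin 6 → ZMod 2)
    (hw : cat22Coeffs w ≠ 0) :
    4 ∣ signedResultantCount w ∧ |signedResultantCount w| ≤ 8 := by
  revert w
  decide

/-- For `p = 2`: if the catalecticant covariant of `w ∈ V₅` over `𝔽₂` is nonzero, then
`S(w) = C·p² = 4C` for some integer `C` with `|C| ≤ 2`; in particular
`S(w) ∈ {-8, -4, 0, 4, 8}`. -/
theorem stmt19 (w : Fin 6 → ZMod 2) (hcat : cat22 w ≠ 0) :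
    (∃ C : ℤ, |C| ≤ 2 ∧ expSum 2 w = (C : ℂ) * (2 : ℂ) ^ 2) ∧
    expSum 2 w ∈ ({-8, -4, 0, 4, 8} : Set ℂ) := by
  have hcoeffs : cat22Coeffs w ≠ 0 := fun h => hcat (by simp [cat22_eq, h])
  obtain ⟨⟨C, hC⟩, hbound⟩ := four_dvd_signedResultantCount_and_abs_le w hcoeffs
  have hCabs : |C| ≤ 2 := by
    rw [hC, abs_mul] at hbound
    norm_num at hbound
    omega
  have hS : expSum 2 w = (C : ℂ) * 2 ^ 2 := by
    rw [expSum_two_eq, hC]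
    push_cast
    ring
  refine ⟨⟨C, hCabs, hS⟩, ?_⟩
  obtain ⟨hlo, hhi⟩ := abs_le.mp hCabs
  rw [hS]
  interval_cases C <;> norm_num
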